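/- arXiv:1310.8328 — 5 statements merged into one kernel-verified Lean document; each statement's English description precedes it below -/
import Mathlib

section
/- The function x ↦ exp(−2V(x)/κ²) is integrable over ℝ if and only if a⁻ > 0 and a⁺ < 0. (Thus the reduced stochastic system has a normalisable steady-state density exactly when the origin corresponds to an attracting sliding region of the piecewise-smooth system.) -/
open MeasureTheory Real Set Filter

/-!
Outside `[-1, 1]` the drift `φ` is constant, so `V` is affine there and the density
`exp (-2 V / κ²)` is the exponential of an affine function with slope `2 a⁻ / κ²` on
`(-∞, -1]` and `2 a⁺ / κ²` on `(1, ∞)`. Such an exponential is integrable on a left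
(right) half-line exactly when its slope is positive (negative); on `[-1, 1]` the
density is continuous, hence integrable, because `V` is a primitive of an integrable function.
-/

lemma not_integrableOn_of_forall_le {α : Type*} [MeasurableSpace α] {μ : Measure α}
    {f : α → ℝ} {s : Set α} {m : ℝ} (hm : 0 < m) (hs : MeasurableSet s) (hμs : μ s = ⊤)
    (hf : ∀ x ∈ s, m ≤ f x) : ¬ IntegrableOn f s μ := by
  intro hint
  have hconst : IntegrableOn (fun _ => m) s μ := by
    refine Integrable.mono' hint aestronglyMeasurable_const ?_
    filter_upwards [ae_restrict_mem hs] with x hx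
    rw [Real.norm_of_nonneg hm.le]
    exact hf x hx
  simp [hm.ne', hμs] at hconst

lemma integrableOn_exp_mul_add_Ioi_iff (α β c : ℝ) :
    IntegrableOn (fun x => exp (α * x + β)) (Ioi c) ↔ α < 0 := by
  refine ⟨fun hint => ?_, fun hα => ?_⟩
  · by_contra! hα
    refine not_integrableOn_of_forall_le (exp_pos (α * c + β)) measurableSet_Ioi
      volume_Ioi (fun x hx => ?_) hint
    gcongr
    exact hx.le
  · simp_rw [exp_add]
    exact (integrableOn_exp_mul_Ioi hα c).mul_const _

lemma integrableOn_exp_mul_add_Iic_iff (α β c : ℝ) :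
    IntegrableOn (fun x => exp (α * x + β)) (Iic c) ↔ 0 < α := by
  refine ⟨fun hint => ?_, fun hα => ?_⟩
  · by_contra! hα
    refine not_integrableOn_of_forall_le (exp_pos (α * c + β)) measurableSet_Iic
      volume_Iic (fun x hx => ?_) hint
    exact exp_le_exp.2 (add_le_add_left (mul_le_mul_of_nonpos_left hx hα) β)
  · simp_rw [exp_add]
    exact (integrableOn_exp_mul_Iic hα c).mul_const _

theorem integrable_exp_iff_of_affine_tails {g : ℝ → ℝ} {a b p q r s : ℝ}
    (hmid : ContinuousOn g (Icc a b)) (hleft : ∀ x ≤ a, g x = p * x + q)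
    (hright : ∀ x, b < x → g x = r * x + s) :
    Integrable (fun x => exp (g x)) ↔ 0 < p ∧ r < 0 := by
  have hIic : IntegrableOn (fun x => exp (g x)) (Iic a) ↔ 0 < p := by
    rw [← integrableOn_exp_mul_add_Iic_iff p q a]
    exact integrableOn_congr_fun (fun x hx => by simp [hleft x hx]) measurableSet_Iic
  have hIoi : IntegrableOn (fun x => exp (g x)) (Ioi b) ↔ r < 0 := by
    rw [← integrableOn_exp_mul_add_Ioi_iff r s b]
    exact integrableOn_congr_fun (fun x hx => by simp [hright x hx]) measurableSet_Ioi
  have hIcc : IntegrableOn (fun x => exp (g x)) (Icc a b) :=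
    (continuous_exp.comp_continuousOn hmid).integrableOn_Icc
  have hcover : univ ⊆ Iic a ∪ Icc a b ∪ Ioi b := by
    intro x _
    by_cases hxa : x ≤ a
    · exact Or.inl (Or.inl hxa)
    by_cases hxb : x ≤ b
    · exact Or.inl (Or.inr ⟨(not_le.1 hxa).le, hxb⟩)
    · exact Or.inr (not_le.1 hxb)
  rw [← hIic, ← hIoi, ← integrableOn_univ]
  refine ⟨fun h => ⟨h.mono_set (subset_univ _), h.mono_set (subset_univ _)⟩,
    fun ⟨hl, hr⟩ => ((hl.union hIcc).union hr).mono_set hcover⟩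

lemma intervalIntegral_eq_mul_sub_of_forall_le {φ : ℝ → ℝ} {a c x : ℝ}
    (hφ : ∀ u ≤ a, φ u = c) (hx : x ≤ a) : ∫ v in a..x, φ v = c * (x - a) := by
  rw [intervalIntegral.integral_congr (g := fun _ => c) fun u hu => hφ u ?_,
    intervalIntegral.integral_const, smul_eq_mul, mul_comm]
  rw [uIcc_of_ge hx] at hu
  exact hu.2

lemma intervalIntegral_eq_add_mul_sub_of_forall_ge {φ : ℝ → ℝ} {a b c x : ℝ}
    (hφab : IntervalIntegrable φ volume a b) (hφ : ∀ u ≥ b, φ u = c) (hx : b ≤ x) :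
    ∫ v in a..x, φ v = (∫ v in a..b, φ v) + c * (x - b) := by
  have hconst : ∫ v in b..x, φ v = c * (x - b) := by
    rw [intervalIntegral.integral_congr (g := fun _ => c) fun u hu => hφ u ?_,
      intervalIntegral.integral_const, smul_eq_mul, mul_comm]
    rw [uIcc_of_le hx] at hu
    exact hu.1
  have hφbx : IntervalIntegrable φ volume b x :=
    (intervalIntegrable_const (c := c)).congr fun u hu => (hφ u ?_).symm
  · rw [← intervalIntegral.integral_add_adjacent_intervals hφab hφbx, hconst]
  · rw [uIoc_of_le hx] at hu
    exact hu.1.le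

theorem stmt1_general
    (aminus aplus : ℝ) (A : ℝ → ℝ)
    (hAcont : ContinuousOn A (Set.Icc (-1) 1))
    (φ : ℝ → ℝ)
    (hφ : ∀ u : ℝ, φ u = if u ≤ -1 then aminus else if u < 1 then A u else aplus)
    (V : ℝ → ℝ)
    (hV : ∀ x : ℝ, V x = -∫ v in (-1:ℝ)..x, φ v)
    (κ : ℝ) (hκ : 0 < κ) :
    MeasureTheory.Integrable (fun x : ℝ => Real.exp (-2 * V x / κ ^ 2)) ↔
      (0 < aminus ∧ aplus < 0) := by
  have hκ2 : 0 < κ ^ 2 := by positivity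
  have hφ_left : ∀ u ≤ -1, φ u = aminus := fun u hu => by simp [hφ u, hu]
  have hφ_right : ∀ u ≥ 1, φ u = aplus := fun u hu => by
    simp [hφ u, (by linarith : ¬ u ≤ -1), not_lt.2 hu]
  have hφ_int : IntegrableOn φ (uIcc (-1) 1) := by
    rw [uIcc_of_le (by norm_num), integrableOn_Icc_iff_integrableOn_Ioo]
    refine (hAcont.integrableOn_Icc.mono_set Ioo_subset_Icc_self).congr_fun
      (fun u hu => ?_) measurableSet_Ioo
    simp [hφ u, not_le.2 hu.1, hu.2]
  have hV_cont : ContinuousOn V (Icc (-1) 1) := by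
    have := (intervalIntegral.continuousOn_primitive_interval hφ_int).neg
    rw [uIcc_of_le (by norm_num)] at this
    exact this.congr fun x _ => hV x
  rw [integrable_exp_iff_of_affine_tails (g := fun x => -2 * V x / κ ^ 2) (a := -1) (b := 1)
      (p := 2 * aminus / κ ^ 2) (q := 2 * aminus / κ ^ 2)
      (r := 2 * aplus / κ ^ 2) (s := -2 * (V 1 + aplus) / κ ^ 2)
      (by fun_prop) ?_ ?_,
    div_pos_iff_of_pos_right hκ2, div_lt_iff₀ hκ2, zero_mul]
  · constructor <;> rintro ⟨h₁, h₂⟩ <;> constructor <;> linarith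
  · intro x hx
    rw [hV x, intervalIntegral_eq_mul_sub_of_forall_le hφ_left hx]
    ring
  · intro x hx
    rw [hV x, hV 1,
      intervalIntegral_eq_add_mul_sub_of_forall_ge hφ_int.intervalIntegrable hφ_right hx.le]
    ring

/-- `exp (-2V/κ²)` is integrable over ℝ iff `a⁻ > 0` and `a⁺ < 0`
(attracting sliding region). -/
theorem stmt1
    (aminus aplus : ℝ) (A : ℝ → ℝ)
    (hAcont : ContinuousOn A (Set.Icc (-1) 1))
    (hAm : A (-1) = aminus) (hAp : A 1 = aplus)
    (φ : ℝ → ℝ)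
    (hφ : ∀ u : ℝ, φ u = if u ≤ -1 then aminus else if u < 1 then A u else aplus)
    (V : ℝ → ℝ)
    (hV : ∀ x : ℝ, V x = -∫ v in (-1:ℝ)..x, φ v)
    (κ : ℝ) (hκ : 0 < κ) :
    MeasureTheory.Integrable (fun x : ℝ => Real.exp (-2 * V x / κ ^ 2)) ↔
      (0 < aminus ∧ aplus < 0) :=
  stmt1_general aminus aplus A hAcont φ hφ V hV κ hκ
end

section
/- Suppose a⁻ > 0 and a⁺ < 0. Then, as κ → ∞, P(κ) = 4/((1/a⁻ + 1/(−a⁺))·κ²) + O(1/κ⁴); that is, the function κ ↦ P(κ) − 4/((1/a⁻ + 1/(−a⁺))·κ²) is O(κ⁻⁴) as κ → ∞. -/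
open MeasureTheory Real Set Filter Asymptotics Topology

/-!
With `β = 2 / κ²`, `P(κ)` is the Gibbs probability of `[-1, 1]` for the density `exp (-β V)`.
On the two tails `V` is affine with outward slopes `a⁻` and `-a⁺`, so the tail masses are exactly
`exp (-β V (∓1)) / (β a^∓)`, while `exp (-β V) = 1 + O(β)` uniformly on `[-1, 1]`. Hence `β` times
the partition function is `1 / a⁻ + 1 / (-a⁺) + O(β)`, the mass of `[-1, 1]` is `2 + O(β)`, and the
probability is `2β / (1 / a⁻ + 1 / (-a⁺)) + O(β²)`.
-/

lemma continuous_ite_Icc {A : ℝ → ℝ} {a b : ℝ} (hab : a ≤ b) (hA : ContinuousOn A (Icc a b)) :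
    Continuous fun u => if u ≤ a then A a else if u < b then A u else A b := by
  have h : (fun u => if u ≤ a then A a else if u < b then A u else A b)
      = fun u => A (projIcc a b hab u) := by
    funext u
    rcases le_or_gt u a with hua | hau
    · rw [if_pos hua, projIcc_of_le_left hab hua]
    rcases lt_or_ge u b with hub | hbu
    · rw [if_neg hau.not_ge, if_pos hub, projIcc_of_mem hab ⟨hau.le, hub.le⟩]
    · rw [if_neg hau.not_ge, if_neg hbu.not_gt, projIcc_of_right_le hab hbu]
  rw [h]
  exact hA.comp_continuous (continuous_subtype_val.comp continuous_projIcc)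
    fun u => (projIcc a b hab u).2

lemma integral_eq_add_mul_of_eqOn {φ : ℝ → ℝ} {c x₀ x : ℝ} (a : ℝ) (hφ : Continuous φ)
    (h : EqOn φ (fun _ => c) (uIcc x₀ x)) :
    ∫ v in a..x, φ v = (∫ v in a..x₀, φ v) + c * (x - x₀) := by
  rw [← intervalIntegral.integral_add_adjacent_intervals (hφ.intervalIntegrable a x₀)
    (hφ.intervalIntegrable x₀ x), intervalIntegral.integral_congr h,
    intervalIntegral.integral_const, smul_eq_mul, mul_comm]

lemma integrableOn_exp_sub_mul_Ioi {r : ℝ} (hr : 0 < r) (c b : ℝ) :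
    IntegrableOn (fun x => exp (c - r * (x - b))) (Ioi b) := by
  have h : (fun x => exp (c - r * (x - b))) = fun x => exp (c + r * b) * exp (-r * x) := by
    funext x; rw [← exp_add]; ring_nf
  rw [h]
  exact (integrableOn_exp_mul_Ioi (neg_neg_of_pos hr) b).const_mul _

lemma integral_exp_sub_mul_Ioi {r : ℝ} (hr : 0 < r) (c b : ℝ) :
    ∫ x in Ioi b, exp (c - r * (x - b)) = exp c / r := by
  have h : ∀ x, exp (c - r * (x - b)) = exp (c + r * b) * exp (-r * x) := by
    intro x; rw [← exp_add]; ring_nf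
  simp_rw [h]
  rw [integral_const_mul, integral_exp_mul_Ioi (neg_neg_of_pos hr), neg_div_neg_eq,
    mul_div_assoc', ← exp_add]
  ring_nf

lemma integrableOn_exp_sub_mul_Iic {r : ℝ} (hr : 0 < r) (c a : ℝ) :
    IntegrableOn (fun x => exp (c - r * (a - x))) (Iic a) := by
  have h : (fun x => exp (c - r * (a - x))) = fun x => exp (c - r * a) * exp (r * x) := by
    funext x; rw [← exp_add]; ring_nf
  rw [h]
  exact (integrableOn_exp_mul_Iic hr a).const_mul _

lemma integral_exp_sub_mul_Iic {r : ℝ} (hr : 0 < r) (c a : ℝ) :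
    ∫ x in Iic a, exp (c - r * (a - x)) = exp c / r := by
  have h : ∀ x, exp (c - r * (a - x)) = exp (c - r * a) * exp (r * x) := by
    intro x; rw [← exp_add]; ring_nf
  simp_rw [h]
  rw [integral_const_mul, integral_exp_mul_Iic hr, mul_div_assoc', ← exp_add]
  ring_nf

theorem integral_exp_neg_mul_eq_of_affine_tails {V : ℝ → ℝ} {a b p q β : ℝ} (hV : Continuous V)
    (hab : a ≤ b) (hp : 0 < p) (hq : 0 < q) (hβ : 0 < β)
    (hleft : ∀ x ≤ a, V x = V a + p * (a - x)) (hright : ∀ x, b ≤ x → V x = V b + q * (x - b)) :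
    ∫ u, exp (-(β * V u)) = exp (-(β * V a)) / (β * p) + (∫ u in a..b, exp (-(β * V u)))
      + exp (-(β * V b)) / (β * q) := by
  set f := fun u => exp (-(β * V u))
  have hl : EqOn f (fun x => exp (-(β * V a) - β * p * (a - x))) (Iic a) := fun x hx => by
    simp only [f, hleft x hx]; ring_nf
  have hr : EqOn f (fun x => exp (-(β * V b) - β * q * (x - b))) (Ioi b) := fun x hx => by
    simp only [f, hright x (le_of_lt hx)]; ring_nf
  have hIl : IntegrableOn f (Iic a) :=
    (integrableOn_exp_sub_mul_Iic (mul_pos hβ hp) _ a).congr_fun hl.symm measurableSet_Iic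
  have hIr : IntegrableOn f (Ioi b) :=
    (integrableOn_exp_sub_mul_Ioi (mul_pos hβ hq) _ b).congr_fun hr.symm measurableSet_Ioi
  have hImid : IntervalIntegrable f volume a b := (by fun_prop : Continuous f).intervalIntegrable a b
  have hIa : IntegrableOn f (Ioi a) := by
    rw [← Ioc_union_Ioi_eq_Ioi hab]
    exact ((intervalIntegrable_iff_integrableOn_Ioc_of_le hab).1 hImid).union hIr
  rw [← intervalIntegral.integral_Iic_add_Ioi hIl hIa,
    ← intervalIntegral.integral_interval_add_Ioi' hImid hIr,
    setIntegral_congr_fun measurableSet_Iic hl, setIntegral_congr_fun measurableSet_Ioi hr,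
    integral_exp_sub_mul_Iic (mul_pos hβ hp), integral_exp_sub_mul_Ioi (mul_pos hβ hq), add_assoc]

lemma isBigO_intervalIntegral_exp_neg_mul_sub {V : ℝ → ℝ} {a b : ℝ}
    (hV : ContinuousOn V (uIcc a b)) :
    (fun β => (∫ u in a..b, exp (-(β * V u))) - (b - a)) =O[𝓝 0] fun β => β := by
  obtain ⟨M, hM⟩ := isCompact_uIcc.exists_bound_of_continuousOn hV
  have hsmall : ∀ᶠ β in 𝓝 (0 : ℝ), |β| * M < 1 := by
    refine Tendsto.eventually_lt_const one_pos ?_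
    have h : Continuous fun β : ℝ => |β| * M := by fun_prop
    simpa using h.tendsto 0
  refine IsBigO.of_bound (2 * M * |b - a|) ?_
  filter_upwards [hsmall] with β hβ
  have hpt : ∀ u ∈ uIcc a b, ‖exp (-(β * V u)) - 1‖ ≤ 2 * (|β| * M) := by
    intro u hu
    have hVu : |β * V u| ≤ |β| * M := by
      rw [abs_mul]; exact mul_le_mul_of_nonneg_left (hM u hu) (abs_nonneg β)
    rw [Real.norm_eq_abs]
    calc |exp (-(β * V u)) - 1| ≤ 2 * |-(β * V u)| := abs_exp_sub_one_le (by rw [abs_neg]; linarith)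
      _ ≤ 2 * (|β| * M) := by rw [abs_neg]; linarith
  have hint : IntervalIntegrable (fun u => exp (-(β * V u))) volume a b :=
    (continuous_exp.comp_continuousOn ((hV.const_smul β).neg)).intervalIntegrable
  calc ‖(∫ u in a..b, exp (-(β * V u))) - (b - a)‖
      = ‖∫ u in a..b, (exp (-(β * V u)) - 1)‖ := by
        rw [intervalIntegral.integral_sub hint intervalIntegrable_const,
          intervalIntegral.integral_const, smul_eq_mul, mul_one]
    _ ≤ 2 * (|β| * M) * |b - a| :=
        intervalIntegral.norm_integral_le_of_norm_le_const fun u hu => hpt u (uIoc_subset_uIcc hu)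
    _ = 2 * M * |b - a| * ‖β‖ := by rw [Real.norm_eq_abs]; ring

lemma isBigO_exp_neg_mul_sub_one (c : ℝ) : (fun β => exp (-(β * c)) - 1) =O[𝓝 0] fun β => β := by
  have h : HasDerivAt (fun β => exp (-(β * c))) (exp (-(0 * c)) * -(1 * c)) 0 :=
    ((hasDerivAt_id 0).mul_const c).neg.exp
  simpa using h.isBigO_sub

lemma isBigO_mul_div_sub_mul_div {α : Type*} {l : Filter α} {β N W : α → ℝ} {m L : ℝ}
    (hL : L ≠ 0) (hβ : Tendsto β l (𝓝 0)) (hN : (fun x => N x - m) =O[l] β)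
    (hW : (fun x => W x - L) =O[l] β) :
    (fun x => β x * N x / W x - β x * m / L) =O[l] fun x => β x ^ 2 := by
  have hWL : Tendsto W l (𝓝 L) := by
    simpa using (hW.trans_tendsto hβ).add_const L
  have hinv : (fun x => (W x * L)⁻¹) =O[l] fun _ => (1 : ℝ) :=
    ((hWL.mul_const L).inv₀ (mul_ne_zero hL hL)).isBigO_one ℝ
  have hnum : (fun x => L * (N x - m) - m * (W x - L)) =O[l] β :=
    (hN.const_mul_left L).sub (hW.const_mul_left m)
  refine ((isBigO_refl β l).mul (hnum.mul hinv)).congr' ?_ ?_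
  · filter_upwards [hWL.eventually_ne hL] with x hx
    field_simp
    ring
  · exact Eventually.of_forall fun x => by simp [sq]

theorem isBigO_occupation_sub {V : ℝ → ℝ} {a b p q : ℝ} (hV : Continuous V) (hab : a ≤ b)
    (hp : 0 < p) (hq : 0 < q) (hleft : ∀ x ≤ a, V x = V a + p * (a - x))
    (hright : ∀ x, b ≤ x → V x = V b + q * (x - b)) :
    (fun β => (∫ u in a..b, exp (-(β * V u))) / (∫ u, exp (-(β * V u)))
        - β * (b - a) / (1 / p + 1 / q)) =O[𝓝[>] 0] fun β => β ^ 2 := by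
  set N := fun β : ℝ => ∫ u in a..b, exp (-(β * V u))
  have hN : (fun β => N β - (b - a)) =O[𝓝 0] fun β => β :=
    isBigO_intervalIntegral_exp_neg_mul_sub hV.continuousOn
  have hβN : (fun β => β * N β) =O[𝓝 0] fun β => β := by
    have hNbdd : N =O[𝓝 0] fun _ => (1 : ℝ) := by
      refine Tendsto.isBigO_one ℝ (c := b - a) ?_
      simpa using (hN.trans_tendsto tendsto_id).add_const (b - a)
    simpa using (isBigO_refl (fun β : ℝ => β) _).mul hNbdd
  -- `W β = β * ∫ u, exp (-(β * V u))` for `β > 0`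
  set W := fun β => exp (-(β * V a)) / p + β * N β + exp (-(β * V b)) / q
  have hW : (fun β => W β - (1 / p + 1 / q)) =O[𝓝 0] fun β => β := by
    have h := (((isBigO_exp_neg_mul_sub_one (V a)).const_mul_left p⁻¹).add hβN).add
      ((isBigO_exp_neg_mul_sub_one (V b)).const_mul_left q⁻¹)
    refine h.congr_left fun β => ?_
    simp only [W]
    ring
  refine (isBigO_mul_div_sub_mul_div (β := fun β => β) (by positivity)
    (tendsto_id.mono_left nhdsWithin_le_nhds)
    (hN.mono nhdsWithin_le_nhds) (hW.mono nhdsWithin_le_nhds)).congr' ?_ (by rfl)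
  filter_upwards [self_mem_nhdsWithin] with β (hβ : 0 < β)
  rw [integral_exp_neg_mul_eq_of_affine_tails hV hab hp hq hβ hleft hright]
  simp only [W, N]
  field_simp

/-- Large-noise asymptotics of the steady-state occupation probability of the
smoothing region: `P(κ) = 4/((1/a⁻ + 1/(-a⁺)) κ²) + O(κ⁻⁴)` as `κ → ∞`. -/
theorem stmt3
    (aminus aplus : ℝ) (A : ℝ → ℝ)
    (hAcont : ContinuousOn A (Set.Icc (-1) 1))
    (hAm : A (-1) = aminus) (hAp : A 1 = aplus)
    (φ : ℝ → ℝ)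
    (hφ : ∀ u : ℝ, φ u = if u ≤ -1 then aminus else if u < 1 then A u else aplus)
    (V : ℝ → ℝ)
    (hV : ∀ x : ℝ, V x = -∫ v in (-1:ℝ)..x, φ v)
    (ham : 0 < aminus) (hap : aplus < 0)
    (P : ℝ → ℝ)
    (hP : ∀ κ : ℝ, 0 < κ → P κ =
      (∫ u in (-1:ℝ)..1, Real.exp (-2 * V u / κ ^ 2)) /
      (∫ u : ℝ, Real.exp (-2 * V u / κ ^ 2))) :
    (fun κ : ℝ => P κ - 4 / ((1 / aminus + 1 / (-aplus)) * κ ^ 2)) =O[Filter.atTop]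
      (fun κ : ℝ => 1 / κ ^ 4) := by
  have hφc : Continuous φ := by
    rw [funext hφ, ← hAm, ← hAp]
    exact continuous_ite_Icc (by norm_num) hAcont
  have hVc : Continuous V := by
    rw [funext hV]
    exact (intervalIntegral.continuous_primitive hφc.intervalIntegrable (-1)).neg
  have hleft : ∀ x ≤ -1, V x = V (-1) + aminus * (-1 - x) := fun x hx => by
    rw [hV x, hV (-1), integral_eq_add_mul_of_eqOn (x₀ := -1) _ hφc (c := aminus) fun v hv => ?_]
    · ring
    · rw [uIcc_of_ge hx] at hv
      rw [hφ, if_pos hv.2]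
  have hright : ∀ x, 1 ≤ x → V x = V 1 + -aplus * (x - 1) := fun x hx => by
    rw [hV x, hV 1, integral_eq_add_mul_of_eqOn (x₀ := 1) _ hφc (c := aplus) fun v hv => ?_]
    · ring
    · rw [uIcc_of_le hx] at hv
      rw [hφ, if_neg (by linarith [hv.1]), if_neg hv.1.not_gt]
  have hβ : Tendsto (fun κ : ℝ => 2 / κ ^ 2) atTop (𝓝[>] 0) :=
    tendsto_nhdsWithin_iff.2 ⟨tendsto_const_nhds.div_atTop (tendsto_pow_atTop two_ne_zero),
      (eventually_gt_atTop 0).mono fun κ hκ => (by positivity : (0 : ℝ) < 2 / κ ^ 2)⟩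
  refine ((isBigO_occupation_sub hVc (by norm_num) ham (neg_pos.2 hap) hleft hright).comp_tendsto
    hβ).congr' ?_ ?_ |>.trans (isBigO_const_mul_self 4 _ _)
  · filter_upwards [eventually_gt_atTop 0] with κ hκ
    have hexponent : ∀ u, -(2 / κ ^ 2 * V u) = -2 * V u / κ ^ 2 := fun u => by ring
    simp only [Function.comp_apply, hexponent, hP κ hκ]
    congr 1
    field_simp
    ring
  · exact Eventually.of_forall fun κ => by simp only [Function.comp]; ring
end

section
/- Suppose a⁻ > 0 and a⁺ < 0, and suppose there exists L ∈ (0,2] such that V(u) ≤ V(1) for all u ∈ [1−L, 1]. Then P(κ) ≥ 1 / (1 + (κ²/(2L))·((1/a⁻)·exp(2V(1)/κ²) + 1/(−a⁺))). -/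
/-!
On both tails the force is constant, so the potential is linear there and the Gibbs weight
`exp (-2 V / κ²)` integrates in closed form: to `κ² / (2 a⁻)` over `(-∞, -1]` (as `V (-1) = 0`)
and to `exp (-2 V(1) / κ²) κ² / (-2 a⁺)` over `(1, ∞)`. Hence `P(κ) = I / (I + J)` with `I` the
integral over `[-1, 1]` and `J` the sum of the two tail integrals. Since `V ≤ V(1)` on
`[1 - L, 1] ⊆ [-1, 1]`, we have `I ≥ L exp (-2 V(1) / κ²)`, and `x ↦ x / (x + J)` is increasing.
-/

open MeasureTheory Real Set

theorem continuous_of_eq_ite_of_continuousOn_Icc {α β : Type*} [LinearOrder α]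
    [TopologicalSpace α] [OrderTopology α] [TopologicalSpace β] {a b : α} (hab : a ≤ b)
    {A φ : α → β} {c d : β} (hA : ContinuousOn A (Icc a b)) (hAa : A a = c) (hAb : A b = d)
    (hφ : ∀ u, φ u = if u ≤ a then c else if u < b then A u else d) :
    Continuous φ := by
  have hproj : φ = fun u => A (projIcc a b hab u) := by
    funext u
    rw [hφ]
    split_ifs with hua hub
    · rw [projIcc_of_le_left hab hua, hAa]
    · rw [projIcc_of_mem hab ⟨(not_le.1 hua).le, hub.le⟩]
    · rw [projIcc_of_right_le hab (not_lt.1 hub), hAb]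
  rw [hproj]
  exact hA.comp_continuous (continuous_subtype_val.comp continuous_projIcc)
    fun u => (projIcc a b hab u).2

theorem neg_primitive_eq_of_eqOn_const {φ V : ℝ → ℝ} {x₀ x₁ x c : ℝ}
    (hV : ∀ x, V x = -∫ v in x₀..x, φ v) (hφ : ∀ a b, IntervalIntegrable φ volume a b)
    (hc : EqOn φ (fun _ => c) (uIcc x₁ x)) :
    V x = V x₁ - c * (x - x₁) := by
  rw [hV, hV, ← intervalIntegral.integral_add_adjacent_intervals (hφ x₀ x₁) (hφ x₁ x),
    intervalIntegral.integral_congr hc, intervalIntegral.integral_const, smul_eq_mul]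
  ring

theorem integral_eq_integral_Iic_add_intervalIntegral_add_integral_Ioi {f : ℝ → ℝ} {a b : ℝ}
    (hab : a ≤ b) (hleft : IntegrableOn f (Iic a)) (hmid : IntegrableOn f (Ioc a b))
    (hright : IntegrableOn f (Ioi b)) :
    ∫ x, f x = (∫ x in Iic a, f x) + (∫ x in a..b, f x) + ∫ x in Ioi b, f x := by
  have hIoi : IntegrableOn f (Ioi a) := by
    rw [← Ioc_union_Ioi_eq_Ioi hab]
    exact hmid.union hright
  rw [← intervalIntegral.integral_Iic_add_Ioi hleft hIoi, ← Ioc_union_Ioi_eq_Ioi hab,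
    setIntegral_union (Ioc_disjoint_Ioi le_rfl) measurableSet_Ioi hmid hright,
    intervalIntegral.integral_of_le hab, add_assoc]

theorem div_add_le_div_add_of_le {m I J : ℝ} (hm : 0 < m) (hmI : m ≤ I) (hJ : 0 ≤ J) :
    m / (m + J) ≤ I / (I + J) := by
  rw [div_le_div_iff₀ (by linarith) (by linarith)]
  nlinarith

section LinearTails

variable {V : ℝ → ℝ} {β : ℝ}

theorem exp_neg_mul_eqOn_of_linear {s : Set ℝ} {a p : ℝ}
    (hV : ∀ x ∈ s, V x = V a - p * (x - a)) :
    EqOn (fun x => exp (-β * V x)) (fun x => exp (-β * V a - β * p * a) * exp (β * p * x)) s := by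
  intro x hx
  simp only [hV x hx, ← exp_add]
  ring_nf

theorem integrableOn_Iic_exp_neg_mul_of_linear {a p : ℝ} (hβ : 0 < β) (hp : 0 < p)
    (hV : ∀ x ≤ a, V x = V a - p * (x - a)) :
    IntegrableOn (fun x => exp (-β * V x)) (Iic a) :=
  IntegrableOn.congr_fun ((integrableOn_exp_mul_Iic (mul_pos hβ hp) a).const_mul _)
    (exp_neg_mul_eqOn_of_linear hV).symm measurableSet_Iic

theorem integral_Iic_exp_neg_mul_of_linear {a p : ℝ} (hβ : 0 < β) (hp : 0 < p)
    (hV : ∀ x ≤ a, V x = V a - p * (x - a)) :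
    ∫ x in Iic a, exp (-β * V x) = exp (-β * V a) / (β * p) := by
  rw [setIntegral_congr_fun measurableSet_Iic (exp_neg_mul_eqOn_of_linear hV),
    integral_const_mul, integral_exp_mul_Iic (mul_pos hβ hp), mul_div_assoc', ← exp_add]
  ring_nf

theorem integrableOn_Ioi_exp_neg_mul_of_linear {b q : ℝ} (hβ : 0 < β) (hq : q < 0)
    (hV : ∀ x ∈ Ioi b, V x = V b - q * (x - b)) :
    IntegrableOn (fun x => exp (-β * V x)) (Ioi b) :=
  IntegrableOn.congr_fun ((integrableOn_exp_mul_Ioi (mul_neg_of_pos_of_neg hβ hq) b).const_mul _)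
    (exp_neg_mul_eqOn_of_linear hV).symm measurableSet_Ioi

theorem integral_Ioi_exp_neg_mul_of_linear {b q : ℝ} (hβ : 0 < β) (hq : q < 0)
    (hV : ∀ x ∈ Ioi b, V x = V b - q * (x - b)) :
    ∫ x in Ioi b, exp (-β * V x) = exp (-β * V b) / (β * -q) := by
  rw [setIntegral_congr_fun measurableSet_Ioi (exp_neg_mul_eqOn_of_linear hV),
    integral_const_mul, integral_exp_mul_Ioi (mul_neg_of_pos_of_neg hβ hq), neg_div, ← div_neg,
    mul_div_assoc', ← exp_add, mul_neg]
  ring_nf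

theorem integral_exp_neg_mul_of_linear_tails (hVc : Continuous V) {a b p q : ℝ} (hab : a ≤ b)
    (hβ : 0 < β) (hp : 0 < p) (hq : q < 0) (hleft : ∀ x ≤ a, V x = V a - p * (x - a))
    (hright : ∀ x ∈ Ioi b, V x = V b - q * (x - b)) :
    ∫ x, exp (-β * V x) =
      exp (-β * V a) / (β * p) + (∫ x in a..b, exp (-β * V x)) + exp (-β * V b) / (β * -q) := by
  have hmid : IntegrableOn (fun x => exp (-β * V x)) (Ioc a b) :=
    (by fun_prop : Continuous fun x => exp (-β * V x)).integrableOn_Icc.mono_set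
      Ioc_subset_Icc_self
  rw [integral_eq_integral_Iic_add_intervalIntegral_add_integral_Ioi hab
      (integrableOn_Iic_exp_neg_mul_of_linear hβ hp hleft) hmid
      (integrableOn_Ioi_exp_neg_mul_of_linear hβ hq hright),
    integral_Iic_exp_neg_mul_of_linear hβ hp hleft, integral_Ioi_exp_neg_mul_of_linear hβ hq hright]

theorem mul_exp_neg_mul_le_intervalIntegral (hVc : Continuous V) (hβ : 0 ≤ β) {a b L : ℝ}
    (hL : 0 ≤ L) (haL : a ≤ b - L) (hVL : ∀ u ∈ Icc (b - L) b, V u ≤ V b) :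
    L * exp (-β * V b) ≤ ∫ x in a..b, exp (-β * V x) := by
  have hint : ∀ c d, IntervalIntegrable (fun x => exp (-β * V x)) volume c d :=
    (by fun_prop : Continuous fun x => exp (-β * V x)).intervalIntegrable
  rw [← intervalIntegral.integral_add_adjacent_intervals (hint a (b - L)) (hint (b - L) b)]
  have hfar : 0 ≤ ∫ x in a..b - L, exp (-β * V x) :=
    intervalIntegral.integral_nonneg haL fun x _ => (exp_pos _).le
  have hnear : ∫ _ in b - L..b, exp (-β * V b) ≤ ∫ x in b - L..b, exp (-β * V x) :=
    intervalIntegral.integral_mono_on (by linarith) intervalIntegrable_const (hint _ _)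
      fun u hu => exp_le_exp.2 (by nlinarith [hVL u hu])
  simp only [intervalIntegral.integral_const, smul_eq_mul, sub_sub_cancel] at hnear
  linarith

end LinearTails

/-- Lower bound for the occupation probability `P(κ)` in the sliding case. -/
theorem stmt4
    (aminus aplus : ℝ) (A : ℝ → ℝ)
    (hAcont : ContinuousOn A (Set.Icc (-1) 1))
    (hAm : A (-1) = aminus) (hAp : A 1 = aplus)
    (φ : ℝ → ℝ)
    (hφ : ∀ u : ℝ, φ u = if u ≤ -1 then aminus else if u < 1 then A u else aplus)
    (V : ℝ → ℝ)
    (hV : ∀ x : ℝ, V x = -∫ v in (-1:ℝ)..x, φ v)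
    (ham : 0 < aminus) (hap : aplus < 0)
    (P : ℝ → ℝ)
    (hP : ∀ κ : ℝ, 0 < κ → P κ =
      (∫ u in (-1:ℝ)..1, Real.exp (-2 * V u / κ ^ 2)) /
      (∫ u : ℝ, Real.exp (-2 * V u / κ ^ 2)))
    (L : ℝ) (hL0 : 0 < L) (hL2 : L ≤ 2)
    (hVL : ∀ u ∈ Set.Icc (1 - L) 1, V u ≤ V 1)
    (κ : ℝ) (hκ : 0 < κ) :
    P κ ≥ 1 / (1 + κ ^ 2 / (2 * L) *
      (1 / aminus * Real.exp (2 * V 1 / κ ^ 2) + 1 / (-aplus))) := by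
  have hφi : ∀ a b, IntervalIntegrable φ volume a b :=
    (continuous_of_eq_ite_of_continuousOn_Icc (by norm_num) hAcont hAm hAp hφ).intervalIntegrable
  have hVc : Continuous V := funext hV ▸ (intervalIntegral.continuous_primitive hφi (-1)).neg
  have hleft : ∀ x ≤ -1, V x = V (-1) - aminus * (x - -1) := fun x hx =>
    neg_primitive_eq_of_eqOn_const hV hφi fun u hu => by
      rw [uIcc_of_ge hx] at hu
      simp [hφ, hu.2]
  have hright : ∀ x ∈ Ioi 1, V x = V 1 - aplus * (x - 1) := fun x hx =>
    neg_primitive_eq_of_eqOn_const hV hφi fun u hu => by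
      rw [uIcc_of_le (le_of_lt hx)] at hu
      simp [hφ, hu.1, (by linarith [hu.1] : ¬u ≤ -1)]
  set β := 2 / κ ^ 2 with hβ
  have hβ0 : 0 < β := by positivity
  have hexp : (fun u => exp (-2 * V u / κ ^ 2)) = fun u => exp (-β * V u) := by
    funext u
    rw [hβ]
    ring_nf
  have hI := mul_exp_neg_mul_le_intervalIntegral (a := -1) hVc hβ0.le hL0.le (by linarith) hVL
  have hE : exp (2 * V 1 / κ ^ 2) = (exp (-β * V 1))⁻¹ := by rw [← exp_neg, hβ]; ring_nf
  have hap' : 0 < -aplus := neg_pos.2 hap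
  rw [hP κ hκ, hexp, integral_exp_neg_mul_of_linear_tails hVc (by norm_num) hβ0 ham hap hleft
    hright, show V (-1) = 0 by simp [hV], mul_zero, exp_zero, ge_iff_le, hE]
  calc 1 / (1 + κ ^ 2 / (2 * L) * (1 / aminus * (exp (-β * V 1))⁻¹ + 1 / -aplus))
      = L * exp (-β * V 1) /
          (L * exp (-β * V 1) + (1 / (β * aminus) + exp (-β * V 1) / (β * -aplus))) := by
        rw [hβ]; field_simp
    _ ≤ _ := div_add_le_div_add_of_le (by positivity) hI (by positivity)
    _ = _ := by ring_nf
end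

section
/- Suppose a⁻ > 0 and a⁺ < 0. Then 1 − P(κ) = O(κ²) as κ → 0⁺; that is, there exist constants M > 0 and κ₀ > 0 such that 1 − P(κ) ≤ M·κ² for all 0 < κ < κ₀. -/
/-!
Outside `[-1, 1]` the potential is affine, so the weight `exp (-2 V / κ²)` has exponential
tails of masses exactly `κ² / (2 a⁻) · exp (-2 V (-1) / κ²)` and
`κ² / (2 |a⁺|) · exp (-2 V 1 / κ²)`.
Since `φ (-1) = a⁻ > 0` and `φ 1 = a⁺ < 0`, the potential stays below `V (-1)` just to the right
of `-1` and below `V 1` just to the left of `1`; hence, for some fixed `ε > 0`, the mass of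
`[-1, 1]` is at least `ε` times each endpoint weight. Dividing the tails by it gives
`1 - P(κ) ≤ (1 / (2 a⁻) + 1 / (2 |a⁺|)) κ² / ε`.
-/

open MeasureTheory Real Set Filter Topology

theorem continuous_of_eq_ite_clamp {A φ : ℝ → ℝ} {a b : ℝ} (hA : ContinuousOn A (Icc a b))
    (hab : a ≤ b) (hφ : ∀ u, φ u = if u ≤ a then A a else if u < b then A u else A b) :
    Continuous φ := by
  have hclamp : φ = fun u => A (max a (min b u)) := by
    ext u
    rw [hφ]
    split_ifs with h₁ h₂
    · rw [min_eq_right (h₁.trans hab), max_eq_left h₁]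
    · rw [min_eq_right h₂.le, max_eq_right (not_le.mp h₁).le]
    · rw [min_eq_left (not_lt.mp h₂), max_eq_right hab]
  rw [hclamp]
  exact hA.comp_continuous (by fun_prop) fun u => ⟨le_max_left _ _, max_le hab (min_le_left _ _)⟩

theorem eventually_forall_Icc_pos {f : ℝ → ℝ} {c : ℝ} (hf : ContinuousAt f c) (hc : 0 < f c) :
    ∀ᶠ ε in 𝓝[>] 0, ∀ u ∈ Icc (c - ε) (c + ε), 0 < f u := by
  filter_upwards [nhdsWithin_le_nhds
    (eventually_closedBall_subset (hf.eventually (lt_mem_nhds hc)))] with ε hε u hu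
  exact hε (Real.closedBall_eq_Icc ▸ hu)

theorem sub_mul_le_intervalIntegral {f : ℝ → ℝ} {a b c d m : ℝ}
    (hf : IntervalIntegrable f volume a b) (hf₀ : ∀ x, 0 ≤ f x) (hac : a ≤ c) (hcd : c ≤ d)
    (hdb : d ≤ b) (hm : ∀ x ∈ Icc c d, m ≤ f x) : (d - c) * m ≤ ∫ x in a..b, f x :=
  calc (d - c) * m = ∫ _ in c..d, m := by rw [intervalIntegral.integral_const, smul_eq_mul]
    _ ≤ ∫ x in c..d, f x := intervalIntegral.integral_mono_on hcd intervalIntegrable_const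
        (hf.mono_set (uIcc_subset_uIcc (Icc_subset_uIcc ⟨hac, hcd.trans hdb⟩)
          (Icc_subset_uIcc ⟨hac.trans hcd, hdb⟩))) hm
    _ ≤ ∫ x in a..b, f x := intervalIntegral.integral_mono_interval hac hcd hdb
        (ae_of_all _ hf₀) hf

theorem one_sub_div_integral_le {f : ℝ → ℝ} {a b : ℝ} (hab : a ≤ b) (hf₀ : ∀ x, 0 ≤ f x)
    (hL : IntegrableOn f (Iic a)) (hI : IntervalIntegrable f volume a b)
    (hR : IntegrableOn f (Ioi b)) (hI₀ : 0 < ∫ x in a..b, f x) :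
    1 - (∫ x in a..b, f x) / ∫ x, f x ≤
      ((∫ x in Iic a, f x) + ∫ x in Ioi b, f x) / ∫ x in a..b, f x := by
  have hLI : IntegrableOn f (Iic b) := Iic_union_Ioc_eq_Iic hab ▸ hL.union hI.1
  have hZ : ∫ x, f x = (∫ x in Iic a, f x) + (∫ x in a..b, f x) + ∫ x in Ioi b, f x := by
    rw [← intervalIntegral.integral_Iic_add_Ioi hLI hR,
      ← intervalIntegral.integral_Iic_sub_Iic hL hLI]
    ring
  have hL₀ : 0 ≤ ∫ x in Iic a, f x := setIntegral_nonneg measurableSet_Iic fun x _ => hf₀ x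
  have hR₀ : 0 ≤ ∫ x in Ioi b, f x := setIntegral_nonneg measurableSet_Ioi fun x _ => hf₀ x
  rw [hZ, one_sub_div (by positivity), add_right_comm, add_sub_cancel_right]
  exact div_le_div_of_nonneg_left (by positivity) hI₀ (by linarith)

section Potential

variable {φ V : ℝ → ℝ} {x₀ : ℝ}

theorem potential_sub_potential (hφ : Continuous φ) (hV : ∀ x, V x = -∫ v in x₀..x, φ v)
    (x y : ℝ) : V y - V x = -∫ v in x..y, φ v := by
  rw [hV, hV, neg_sub_neg, intervalIntegral.integral_interval_sub_left
    (hφ.intervalIntegrable _ _) (hφ.intervalIntegrable _ _), intervalIntegral.integral_symm]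

theorem continuous_potential (hφ : Continuous φ) (hV : ∀ x, V x = -∫ v in x₀..x, φ v) :
    Continuous V := by
  rw [funext hV]
  exact (intervalIntegral.continuous_primitive (fun _ _ => hφ.intervalIntegrable _ _) x₀).neg

theorem potential_eq_of_eqOn_uIcc (hφ : Continuous φ) (hV : ∀ x, V x = -∫ v in x₀..x, φ v)
    {c x α : ℝ} (hconst : ∀ v ∈ uIcc c x, φ v = α) : V x = V c + α * (c - x) := by
  have h := potential_sub_potential hφ hV c x
  rw [intervalIntegral.integral_congr hconst, intervalIntegral.integral_const, smul_eq_mul] at h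
  linarith

theorem potential_eq_of_forall_le (hφ : Continuous φ) (hV : ∀ x, V x = -∫ v in x₀..x, φ v)
    {c α : ℝ} (hconst : ∀ v ≤ c, φ v = α) : ∀ x ≤ c, V x = V c + α * (c - x) :=
  fun _ hx => potential_eq_of_eqOn_uIcc hφ hV fun v hv => hconst v (uIcc_of_ge hx ▸ hv).2

theorem potential_eq_of_forall_ge (hφ : Continuous φ) (hV : ∀ x, V x = -∫ v in x₀..x, φ v)
    {c α : ℝ} (hconst : ∀ v ≥ c, φ v = α) : ∀ x ≥ c, V x = V c + α * (c - x) :=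
  fun _ hx => potential_eq_of_eqOn_uIcc hφ hV fun v hv => hconst v (uIcc_of_le hx ▸ hv).1

theorem eventually_potential_le_of_pos (hφ : Continuous φ) (hV : ∀ x, V x = -∫ v in x₀..x, φ v)
    {a : ℝ} (ha : 0 < φ a) : ∀ᶠ ε in 𝓝[>] 0, ∀ u ∈ Icc a (a + ε), V u ≤ V a := by
  filter_upwards [eventually_forall_Icc_pos hφ.continuousAt ha, self_mem_nhdsWithin]
    with ε hε (hε₀ : 0 < ε) u hu
  have h := potential_sub_potential hφ hV a u
  have : 0 ≤ ∫ v in a..u, φ v := intervalIntegral.integral_nonneg hu.1 fun v hv =>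
    (hε v ⟨by linarith [hv.1], hv.2.trans hu.2⟩).le
  linarith

theorem eventually_potential_le_of_neg (hφ : Continuous φ) (hV : ∀ x, V x = -∫ v in x₀..x, φ v)
    {b : ℝ} (hb : φ b < 0) : ∀ᶠ ε in 𝓝[>] 0, ∀ u ∈ Icc (b - ε) b, V u ≤ V b := by
  filter_upwards [eventually_forall_Icc_pos hφ.neg.continuousAt (neg_pos.mpr hb),
    self_mem_nhdsWithin] with ε hε (hε₀ : 0 < ε) u hu
  have h := potential_sub_potential hφ hV u b
  have : 0 ≤ ∫ v in u..b, -φ v := intervalIntegral.integral_nonneg hu.2 fun v hv =>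
    (hε v ⟨hu.1.trans hv.1, by linarith [hv.2]⟩).le
  rw [intervalIntegral.integral_neg] at this
  linarith

end Potential

section Boltzmann

variable {V : ℝ → ℝ} {κ α c : ℝ}

theorem exp_potential_eq_of_affine {x : ℝ} (hκ : κ ≠ 0) (hx : V x = V c + α * (c - x)) :
    exp (-2 * V x / κ ^ 2) =
      exp (-2 * V c / κ ^ 2 - 2 * α / κ ^ 2 * c) * exp (2 * α / κ ^ 2 * x) := by
  rw [← exp_add, hx]
  congr 1
  field_simp
  ring

theorem integrableOn_Iic_exp_potential (hκ : κ ≠ 0) (hα : 0 < α)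
    (hV : ∀ x ≤ c, V x = V c + α * (c - x)) :
    IntegrableOn (fun x => exp (-2 * V x / κ ^ 2)) (Iic c) :=
  IntegrableOn.congr_fun
    ((integrableOn_exp_mul_Iic (a := 2 * α / κ ^ 2) (by positivity) c).const_mul _)
    (fun x hx => (exp_potential_eq_of_affine hκ (hV x hx)).symm) measurableSet_Iic

theorem integral_Iic_exp_potential (hκ : κ ≠ 0) (hα : 0 < α)
    (hV : ∀ x ≤ c, V x = V c + α * (c - x)) :
    ∫ x in Iic c, exp (-2 * V x / κ ^ 2) = κ ^ 2 / (2 * α) * exp (-2 * V c / κ ^ 2) := by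
  rw [setIntegral_congr_fun measurableSet_Iic fun x hx => exp_potential_eq_of_affine hκ (hV x hx),
    integral_const_mul, integral_exp_mul_Iic (by positivity), mul_div_assoc', ← exp_add,
    sub_add_cancel]
  field_simp

theorem integrableOn_Ioi_exp_potential (hκ : κ ≠ 0) (hα : α < 0)
    (hV : ∀ x ≥ c, V x = V c + α * (c - x)) :
    IntegrableOn (fun x => exp (-2 * V x / κ ^ 2)) (Ioi c) :=
  IntegrableOn.congr_fun
    ((integrableOn_exp_mul_Ioi (a := 2 * α / κ ^ 2)
      (div_neg_of_neg_of_pos (by linarith) (by positivity)) c).const_mul _)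
    (fun x hx => (exp_potential_eq_of_affine hκ (hV x hx.le)).symm) measurableSet_Ioi

theorem integral_Ioi_exp_potential (hκ : κ ≠ 0) (hα : α < 0)
    (hV : ∀ x ≥ c, V x = V c + α * (c - x)) :
    ∫ x in Ioi c, exp (-2 * V x / κ ^ 2) = κ ^ 2 / (2 * -α) * exp (-2 * V c / κ ^ 2) := by
  rw [setIntegral_congr_fun measurableSet_Ioi fun x hx =>
      exp_potential_eq_of_affine hκ (hV x hx.le),
    integral_const_mul, integral_exp_mul_Ioi (div_neg_of_neg_of_pos (by linarith) (by positivity)),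
    mul_div_assoc', mul_neg, ← exp_add, sub_add_cancel]
  field_simp

theorem exp_potential_le_of_le {x y : ℝ} (h : V y ≤ V x) :
    exp (-2 * V x / κ ^ 2) ≤ exp (-2 * V y / κ ^ 2) :=
  exp_le_exp.mpr (div_le_div_of_nonneg_right (by linarith) (sq_nonneg κ))

theorem one_sub_div_integral_exp_potential_le {a b β ε : ℝ} (hV : Continuous V) (hκ : κ ≠ 0)
    (hα : 0 < α) (hβ : β < 0) (hε : 0 < ε) (hεab : ε ≤ b - a)
    (hleft : ∀ x ≤ a, V x = V a + α * (a - x)) (hright : ∀ x ≥ b, V x = V b + β * (b - x))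
    (hVa : ∀ u ∈ Icc a (a + ε), V u ≤ V a) (hVb : ∀ u ∈ Icc (b - ε) b, V u ≤ V b) :
    1 - (∫ u in a..b, exp (-2 * V u / κ ^ 2)) / (∫ u, exp (-2 * V u / κ ^ 2)) ≤
      (1 / (2 * α) + 1 / (2 * -β)) / ε * κ ^ 2 := by
  set w : ℝ → ℝ := fun u => exp (-2 * V u / κ ^ 2) with hw_def
  have hw : IntervalIntegrable w volume a b := (by fun_prop : Continuous w).intervalIntegrable a b
  have hw₀ : ∀ u, 0 ≤ w u := fun u => (exp_pos _).le
  have hwa : ε * w a ≤ ∫ u in a..b, w u := by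
    simpa only [add_sub_cancel_left] using sub_mul_le_intervalIntegral hw hw₀ le_rfl
      (by linarith) (by linarith) fun u hu => exp_potential_le_of_le (hVa u hu)
  have hwb : ε * w b ≤ ∫ u in a..b, w u := by
    simpa only [sub_sub_cancel] using sub_mul_le_intervalIntegral hw hw₀ (by linarith)
      (by linarith) le_rfl fun u hu => exp_potential_le_of_le (hVb u hu)
  have hI₀ : 0 < ∫ u in a..b, w u := lt_of_lt_of_le (by positivity) hwa
  calc 1 - (∫ u in a..b, w u) / ∫ u, w u
      ≤ ((∫ u in Iic a, w u) + ∫ u in Ioi b, w u) / ∫ u in a..b, w u :=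
        one_sub_div_integral_le (by linarith) hw₀ (integrableOn_Iic_exp_potential hκ hα hleft) hw
          (integrableOn_Ioi_exp_potential hκ hβ hright) hI₀
    _ ≤ (∫ u in Iic a, w u) / (ε * w a) + (∫ u in Ioi b, w u) / (ε * w b) := by
        rw [add_div]
        gcongr
    _ = (1 / (2 * α) + 1 / (2 * -β)) / ε * κ ^ 2 := by
        rw [integral_Iic_exp_potential hκ hα hleft, integral_Ioi_exp_potential hκ hβ hright, hw_def]
        field_simp

end Boltzmann

/-- Small-noise behaviour in the sliding case: `1 - P(κ) = O(κ²)` as `κ → 0⁺`. -/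
theorem stmt5
    (aminus aplus : ℝ) (A : ℝ → ℝ)
    (hAcont : ContinuousOn A (Set.Icc (-1) 1))
    (hAm : A (-1) = aminus) (hAp : A 1 = aplus)
    (φ : ℝ → ℝ)
    (hφ : ∀ u : ℝ, φ u = if u ≤ -1 then aminus else if u < 1 then A u else aplus)
    (V : ℝ → ℝ)
    (hV : ∀ x : ℝ, V x = -∫ v in (-1:ℝ)..x, φ v)
    (ham : 0 < aminus) (hap : aplus < 0)
    (P : ℝ → ℝ)
    (hP : ∀ κ : ℝ, 0 < κ → P κ =
      (∫ u in (-1:ℝ)..1, Real.exp (-2 * V u / κ ^ 2)) /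
      (∫ u : ℝ, Real.exp (-2 * V u / κ ^ 2))) :
    ∃ M > (0:ℝ), ∃ κ₀ > (0:ℝ), ∀ κ : ℝ, 0 < κ → κ < κ₀ → 1 - P κ ≤ M * κ ^ 2 := by
  subst hAm hAp
  have hφc : Continuous φ := continuous_of_eq_ite_clamp hAcont (by norm_num) hφ
  have hφl : ∀ v ≤ -1, φ v = A (-1) := fun v hv => by rw [hφ, if_pos hv]
  have hφr : ∀ v ≥ 1, φ v = A 1 := fun v hv => by
    rw [hφ, if_neg (by linarith), if_neg (by linarith)]
  obtain ⟨ε, hVl, hVr, hε₀, hε₂⟩ :=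
    ((eventually_potential_le_of_pos hφc hV (by rwa [hφl _ le_rfl])).and
      ((eventually_potential_le_of_neg hφc hV (by rwa [hφr _ le_rfl])).and
        (Ioc_mem_nhdsGT two_pos))).exists
  refine ⟨(1 / (2 * A (-1)) + 1 / (2 * -A 1)) / ε,
    div_pos (add_pos (by positivity) (one_div_pos.mpr (by linarith))) hε₀, 1, one_pos,
    fun κ hκ _ => ?_⟩
  rw [hP κ hκ]
  exact one_sub_div_integral_exp_potential_le (continuous_potential hφc hV) hκ.ne' ham hap hε₀
    (by linarith) (potential_eq_of_forall_le hφc hV hφl) (potential_eq_of_forall_ge hφc hV hφr)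
    hVl hVr
end

section
/- Suppose a⁻ > 0 and a⁺ > 0, fix r > 1, and let ΔV = max{ V(v) − V(u) : −r ≤ u ≤ v ≤ r, v ≥ 0 }. If ΔV > 0 (i.e. the potential V has a well), then lim_{κ → 0⁺} (κ²/2)·log T̃₀(κ) = ΔV; in particular T̃₀(κ) is exponentially large as κ → 0⁺. -/
/-!
Combining the two exponentials, `T̃₀(κ)` is `2 / κ²` times the integral of
`exp (2 (V v - V u) / κ²)` over `0 ≤ v ≤ r`, `-r ≤ u ≤ v`: a Laplace-type integral whose exponent
has maximum `ΔV`. Bounding the integrand by its maximum gives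
`T̃₀(κ) ≤ (4 r² / κ²) exp (2 ΔV / κ²)`. Since `ΔV > 0`, a maximiser has `u₀ < v₀`, so continuity
of `V` yields a square `[u₀, u₀ + η] × [v₁, v₁ + η]` inside the region on which the exponent
exceeds a given `a < ΔV`, whence `T̃₀(κ) ≥ (2 η² / κ²) exp (2 a / κ²)`. The prefactors, polynomial
in `κ`, disappear after applying `κ² / 2 · log`.
-/

open MeasureTheory Real Set Filter Topology intervalIntegral

lemma continuous_of_eq_ite_Icc {a b : ℝ} (hab : a ≤ b) {A φ : ℝ → ℝ}
    (hA : ContinuousOn A (Icc a b))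
    (hφ : ∀ u, φ u = if u ≤ a then A a else if u < b then A u else A b) : Continuous φ := by
  refine (hA.comp_continuous (continuous_subtype_val.comp continuous_projIcc)
    fun u => (projIcc a b hab u).2).congr fun u => ?_
  rw [hφ, Function.comp_apply, Function.comp_apply]
  split_ifs with hua hub
  · rw [projIcc_of_le_left hab hua]
  · rw [projIcc_of_mem hab ⟨(not_le.1 hua).le, hub.le⟩]
  · rw [projIcc_of_right_le hab (not_lt.1 hub)]

lemma tendsto_sq_div_two_mul_log_mul_exp {c : ℝ} (hc : 0 < c) (a : ℝ) :
    Tendsto (fun κ : ℝ => κ ^ 2 / 2 * log (c / κ ^ 2 * exp (2 * a / κ ^ 2))) (𝓝[>] 0) (𝓝 a) := by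
  have hlog : Tendsto (fun κ : ℝ => log κ * κ ^ (2 : ℝ)) (𝓝[>] 0) (𝓝 0) :=
    tendsto_log_mul_rpow_nhdsGT_zero two_pos
  have hpoly : Tendsto (fun κ : ℝ => a + κ ^ 2 / 2 * log c) (𝓝[>] 0) (𝓝 a) :=
    tendsto_nhdsWithin_of_tendsto_nhds (by simpa using
      ((by fun_prop : Continuous fun κ : ℝ => a + κ ^ 2 / 2 * log c).tendsto 0))
  have hsum : Tendsto (fun κ : ℝ => a + κ ^ 2 / 2 * log c - log κ * κ ^ (2 : ℝ))
      (𝓝[>] 0) (𝓝 a) := by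
    simpa using hpoly.sub hlog
  refine hsum.congr' ?_
  filter_upwards [self_mem_nhdsWithin] with κ (hκ : 0 < κ)
  rw [log_mul (by positivity) (exp_pos _).ne', log_exp, log_div hc.ne' (by positivity), log_pow,
    rpow_two]
  field_simp
  ring

lemma exp_mul_integral_exp_neg (V : ℝ → ℝ) (r κ v : ℝ) :
    exp (2 * V v / κ ^ 2) * ∫ u in (-r)..v, exp (-2 * V u / κ ^ 2) =
      ∫ u in (-r)..v, exp (2 * (V v - V u) / κ ^ 2) := by
  rw [← intervalIntegral.integral_const_mul]
  congr 1 with u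
  rw [← exp_add]
  ring_nf

lemma continuous_exp_mul_integral_exp_neg {V : ℝ → ℝ} (hV : Continuous V) (r κ : ℝ) :
    Continuous fun v => exp (2 * V v / κ ^ 2) * ∫ u in (-r)..v, exp (-2 * V u / κ ^ 2) :=
  (by fun_prop : Continuous fun v => exp (2 * V v / κ ^ 2)).mul <| continuous_primitive
    (fun _ _ => (by fun_prop : Continuous fun u => exp (-2 * V u / κ ^ 2)).intervalIntegrable _ _)
    _

/-- `κ² T̃₀(κ) / 2`. -/
noncomputable def escapeIntegral (V : ℝ → ℝ) (r κ : ℝ) : ℝ :=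
  ∫ v in (0 : ℝ)..r, exp (2 * V v / κ ^ 2) * ∫ u in (-r)..v, exp (-2 * V u / κ ^ 2)

section EscapeIntegral

variable {V : ℝ → ℝ} {r : ℝ}

lemma escapeIntegral_pos (hV : Continuous V) (hr : 0 < r) (κ : ℝ) :
    0 < escapeIntegral V r κ := by
  refine intervalIntegral_pos_of_pos_on
    ((continuous_exp_mul_integral_exp_neg hV r κ).intervalIntegrable _ _) (fun v hv => ?_) hr
  refine mul_pos (exp_pos _) (intervalIntegral_pos_of_pos ?_ (fun _ => exp_pos _) ?_)
  · exact (by fun_prop : Continuous fun u => exp (-2 * V u / κ ^ 2)).intervalIntegrable _ _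
  · linarith [hv.1]

lemma escapeIntegral_le (hV : Continuous V) (hr : 0 ≤ r) {M : ℝ}
    (hM : ∀ u v, -r ≤ u → u ≤ v → v ≤ r → 0 ≤ v → V v - V u ≤ M) (κ : ℝ) :
    escapeIntegral V r κ ≤ 2 * r ^ 2 * exp (2 * M / κ ^ 2) := by
  have hinner : ∀ v ∈ Icc 0 r,
      exp (2 * V v / κ ^ 2) * ∫ u in (-r)..v, exp (-2 * V u / κ ^ 2) ≤
        2 * r * exp (2 * M / κ ^ 2) := by
    rintro v ⟨hv, hvr⟩
    have hcont : Continuous fun u => exp (2 * (V v - V u) / κ ^ 2) := by fun_prop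
    rw [exp_mul_integral_exp_neg]
    calc ∫ u in (-r)..v, exp (2 * (V v - V u) / κ ^ 2)
        ≤ ∫ _ in (-r)..v, exp (2 * M / κ ^ 2) := by
          refine integral_mono_on (by linarith) (hcont.intervalIntegrable _ _)
            intervalIntegrable_const fun u hu => ?_
          gcongr
          exact hM u v hu.1 hu.2 hvr hv
      _ = (v + r) * exp (2 * M / κ ^ 2) := by simp
      _ ≤ 2 * r * exp (2 * M / κ ^ 2) := by gcongr; linarith
  calc escapeIntegral V r κ ≤ ∫ _ in (0 : ℝ)..r, 2 * r * exp (2 * M / κ ^ 2) :=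
        integral_mono_on hr ((continuous_exp_mul_integral_exp_neg hV r κ).intervalIntegrable _ _)
          intervalIntegrable_const hinner
    _ = 2 * r ^ 2 * exp (2 * M / κ ^ 2) := by simp; ring

lemma sq_mul_exp_le_escapeIntegral (hV : Continuous V) {a u₀ v₁ η : ℝ} (hη : 0 ≤ η)
    (hu₀ : -r ≤ u₀) (hu₀v₁ : u₀ + η ≤ v₁) (hv₁ : 0 ≤ v₁) (hv₁r : v₁ + η ≤ r)
    (ha : ∀ u ∈ Icc u₀ (u₀ + η), ∀ v ∈ Icc v₁ (v₁ + η), a ≤ V v - V u) (κ : ℝ) :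
    η ^ 2 * exp (2 * a / κ ^ 2) ≤ escapeIntegral V r κ := by
  have hcont := continuous_exp_mul_integral_exp_neg hV r κ
  have hinner : ∀ v ∈ Icc v₁ (v₁ + η), η * exp (2 * a / κ ^ 2) ≤
      exp (2 * V v / κ ^ 2) * ∫ u in (-r)..v, exp (-2 * V u / κ ^ 2) := by
    intro v hv
    have hcont_u : Continuous fun u => exp (2 * (V v - V u) / κ ^ 2) := by fun_prop
    rw [exp_mul_integral_exp_neg]
    calc η * exp (2 * a / κ ^ 2) = ∫ _ in u₀..(u₀ + η), exp (2 * a / κ ^ 2) := by simp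
      _ ≤ ∫ u in u₀..(u₀ + η), exp (2 * (V v - V u) / κ ^ 2) :=
          integral_mono_on (by linarith) intervalIntegrable_const (hcont_u.intervalIntegrable _ _)
            fun u hu => by gcongr; exact ha u hu v hv
      _ ≤ ∫ u in (-r)..v, exp (2 * (V v - V u) / κ ^ 2) :=
          integral_mono_interval hu₀ (by linarith) (by linarith [hv.1])
            (.of_forall fun _ => (exp_pos _).le) (hcont_u.intervalIntegrable _ _)
  have hnonneg : ∀ v ∈ Ioc 0 r,
      0 ≤ exp (2 * V v / κ ^ 2) * ∫ u in (-r)..v, exp (-2 * V u / κ ^ 2) := fun v hv =>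
    mul_nonneg (exp_pos _).le
      (integral_nonneg (by linarith [hv.1, hv.2]) fun _ _ => (exp_pos _).le)
  calc η ^ 2 * exp (2 * a / κ ^ 2) = ∫ _ in v₁..(v₁ + η), η * exp (2 * a / κ ^ 2) := by
        simp; ring
    _ ≤ ∫ v in v₁..(v₁ + η), exp (2 * V v / κ ^ 2) * ∫ u in (-r)..v, exp (-2 * V u / κ ^ 2) :=
        integral_mono_on (by linarith) intervalIntegrable_const (hcont.intervalIntegrable _ _)
          hinner
    _ ≤ escapeIntegral V r κ :=
        integral_mono_interval hv₁ (by linarith) hv₁r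
          ((ae_restrict_iff' measurableSet_Ioc).2 (.of_forall hnonneg))
          (hcont.intervalIntegrable _ _)

lemma exists_square_lt_sub (hV : Continuous V) {u₀ v₀ a : ℝ} (hu₀ : -r ≤ u₀) (huv : u₀ < v₀)
    (hv₀ : 0 ≤ v₀) (hv₀r : v₀ ≤ r) (ha : a < V v₀ - V u₀) :
    ∃ η v₁, 0 < η ∧ u₀ + η ≤ v₁ ∧ 0 ≤ v₁ ∧ v₁ + η ≤ r ∧
      ∀ u ∈ Icc u₀ (u₀ + η), ∀ v ∈ Icc v₁ (v₁ + η), a ≤ V v - V u := by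
  obtain ⟨δ, hδ, rfl⟩ : ∃ δ, 0 < δ ∧ a = V v₀ - V u₀ - 2 * δ :=
    ⟨(V v₀ - V u₀ - a) / 2, by linarith, by ring⟩
  obtain ⟨ε₁, hε₁, hnear_u⟩ := Metric.eventually_nhds_iff.1
    ((hV.tendsto u₀).eventually (gt_mem_nhds (show V u₀ < V u₀ + δ by linarith)))
  obtain ⟨ε₂, hε₂, hnear_v⟩ := Metric.eventually_nhds_iff.1
    ((hV.tendsto v₀).eventually (lt_mem_nhds (show V v₀ - δ < V v₀ by linarith)))
  obtain ⟨η, hη, hηlt⟩ : ∃ η, 0 < η ∧ η < min (min ε₁ ε₂) ((v₀ - u₀) / 2) :=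
    exists_between (lt_min (lt_min hε₁ hε₂) (by linarith))
  rw [lt_min_iff, lt_min_iff] at hηlt
  obtain ⟨⟨hηε₁, hηε₂⟩, hηuv⟩ := hηlt
  -- `v₁` is `v₀` moved left just enough that the square stays below `v = r`.
  have hv₁ : v₀ - η ≤ min v₀ (r - η) := le_min (by linarith) (by linarith)
  refine ⟨η, min v₀ (r - η), hη, le_min (by linarith) (by linarith), le_min hv₀ (by linarith),
    by linarith [min_le_right v₀ (r - η)], fun u hu v hv => ?_⟩
  have hVu := hnear_u (show dist u u₀ < ε₁ by
    rw [dist_eq, abs_lt]; constructor <;> linarith [hu.1, hu.2])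
  have hVv := hnear_v (show dist v v₀ < ε₂ by
    rw [dist_eq, abs_lt]; constructor <;> linarith [hv.1, hv.2, min_le_left v₀ (r - η)])
  linarith [hVu, hVv]

theorem tendsto_sq_div_two_mul_log_escapeIntegral (hV : Continuous V) (hr : 0 < r) {ΔV : ℝ}
    (hΔV : IsGreatest {d | ∃ u v, -r ≤ u ∧ u ≤ v ∧ v ≤ r ∧ 0 ≤ v ∧ d = V v - V u} ΔV)
    (hΔVpos : 0 < ΔV) :
    Tendsto (fun κ => κ ^ 2 / 2 * log (2 / κ ^ 2 * escapeIntegral V r κ)) (𝓝[>] 0) (𝓝 ΔV) := by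
  obtain ⟨⟨u₀, v₀, hu₀, huv₀, hv₀r, hv₀, hΔ⟩, hmax⟩ := hΔV
  have huv : u₀ < v₀ := huv₀.lt_of_ne (by rintro rfl; simp [hΔ] at hΔVpos)
  rw [tendsto_order]
  refine ⟨fun b hb => ?_, fun b hb => ?_⟩
  · obtain ⟨a, hba, haΔ⟩ := exists_between hb
    obtain ⟨η, v₁, hη, hu₀v₁, hv₁, hv₁r, hsq⟩ :=
      exists_square_lt_sub hV hu₀ huv hv₀ hv₀r (hΔ ▸ haΔ)
    filter_upwards [(tendsto_sq_div_two_mul_log_mul_exp (c := 2 * η ^ 2) (by positivity)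
      a).eventually_const_lt hba, self_mem_nhdsWithin]
      with κ hκ (hκ0 : 0 < κ)
    refine hκ.trans_le ?_
    have hlow := sq_mul_exp_le_escapeIntegral hV hη.le hu₀ hu₀v₁ hv₁ hv₁r hsq κ
    calc κ ^ 2 / 2 * log (2 * η ^ 2 / κ ^ 2 * exp (2 * a / κ ^ 2))
        = κ ^ 2 / 2 * log (2 / κ ^ 2 * (η ^ 2 * exp (2 * a / κ ^ 2))) := by ring_nf
      _ ≤ κ ^ 2 / 2 * log (2 / κ ^ 2 * escapeIntegral V r κ) := by gcongr
  · filter_upwards [(tendsto_sq_div_two_mul_log_mul_exp (c := 4 * r ^ 2) (by positivity)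
      ΔV).eventually_lt_const hb, self_mem_nhdsWithin] with κ hκ (hκ0 : 0 < κ)
    refine lt_of_le_of_lt ?_ hκ
    have hpos := escapeIntegral_pos hV hr κ
    have hup := escapeIntegral_le hV hr.le
      (fun u v h₁ h₂ h₃ h₄ => hmax ⟨u, v, h₁, h₂, h₃, h₄, rfl⟩) κ
    calc κ ^ 2 / 2 * log (2 / κ ^ 2 * escapeIntegral V r κ)
        ≤ κ ^ 2 / 2 * log (2 / κ ^ 2 * (2 * r ^ 2 * exp (2 * ΔV / κ ^ 2))) := by gcongr
      _ = κ ^ 2 / 2 * log (4 * r ^ 2 / κ ^ 2 * exp (2 * ΔV / κ ^ 2)) := by ring_nf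

end EscapeIntegral

theorem stmt12_general
    (aminus aplus : ℝ) (A : ℝ → ℝ)
    (hAcont : ContinuousOn A (Set.Icc (-1) 1))
    (hAm : A (-1) = aminus) (hAp : A 1 = aplus)
    (φ : ℝ → ℝ)
    (hφ : ∀ u : ℝ, φ u = if u ≤ -1 then aminus else if u < 1 then A u else aplus)
    (V : ℝ → ℝ)
    (hV : ∀ x : ℝ, V x = -∫ v in (-1:ℝ)..x, φ v)
    (r : ℝ) (hr : 1 < r)
    (ΔV : ℝ)
    (hΔV : IsGreatest
      {d : ℝ | ∃ u v : ℝ, -r ≤ u ∧ u ≤ v ∧ v ≤ r ∧ 0 ≤ v ∧ d = V v - V u} ΔV)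
    (hΔVpos : 0 < ΔV) :
    Filter.Tendsto
      (fun κ : ℝ => κ ^ 2 / 2 * Real.log
        (2 / κ ^ 2 * ∫ v in (0:ℝ)..r, Real.exp (2 * V v / κ ^ 2) *
          ∫ u in (-r)..v, Real.exp (-2 * V u / κ ^ 2)))
      (nhdsWithin 0 (Set.Ioi 0)) (nhds ΔV) := by
  have hφc : Continuous φ :=
    continuous_of_eq_ite_Icc (by norm_num) hAcont fun u => by rw [hφ, hAm, hAp]
  have hVc : Continuous V :=
    (continuous_primitive (fun a b => hφc.intervalIntegrable a b) (-1)).neg.congr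
      fun x => (hV x).symm
  exact tendsto_sq_div_two_mul_log_escapeIntegral hVc (by linarith) hΔV hΔVpos

/-- If the potential has a well (`ΔV > 0`) then the mean escape time `T̃₀(κ)` is
exponentially large as `κ → 0⁺`, with log-asymptotics `(κ²/2) log T̃₀(κ) → ΔV`. -/
theorem stmt12
    (aminus aplus : ℝ) (A : ℝ → ℝ)
    (hAcont : ContinuousOn A (Set.Icc (-1) 1))
    (hAm : A (-1) = aminus) (hAp : A 1 = aplus)
    (φ : ℝ → ℝ)
    (hφ : ∀ u : ℝ, φ u = if u ≤ -1 then aminus else if u < 1 then A u else aplus)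
    (V : ℝ → ℝ)
    (hV : ∀ x : ℝ, V x = -∫ v in (-1:ℝ)..x, φ v)
    (ham : 0 < aminus) (hap : 0 < aplus)
    (r : ℝ) (hr : 1 < r)
    (ΔV : ℝ)
    (hΔV : IsGreatest
      {d : ℝ | ∃ u v : ℝ, -r ≤ u ∧ u ≤ v ∧ v ≤ r ∧ 0 ≤ v ∧ d = V v - V u} ΔV)
    (hΔVpos : 0 < ΔV) :
    Filter.Tendsto
      (fun κ : ℝ => κ ^ 2 / 2 * Real.log
        (2 / κ ^ 2 * ∫ v in (0:ℝ)..r, Real.exp (2 * V v / κ ^ 2) *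
          ∫ u in (-r)..v, Real.exp (-2 * V u / κ ^ 2)))
      (nhdsWithin 0 (Set.Ioi 0)) (nhds ΔV) :=
  stmt12_general aminus aplus A hAcont hAm hAp φ hφ V hV r hr ΔV hΔV hΔVpos
end
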